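/- arXiv:1803.07309 — 3 statements merged into one kernel-verified Lean document; each statement's English description precedes it below -/
import Mathlib

section
/- Let C be a symmetric monoidal closed, complete, well-powered category with a small cogenerating family, and let F : C → C be a covariant endofunctor. Then the end ∫_X X^{F(X)} of the bifunctor (X,Y) ↦ Y^{F(X)} : C^op × C → C exists. -/
/-!
A wedge `ε_X : E ⟶ [F X, X]` is determined by its components at the cogenerators: since
`[F X, -]` is a right adjoint, it turns the coseparating family into a jointly monic one, so
`ε_X` is determined by the composites `ε_X ≫ [F X, u] = ε_G ≫ [F u, G]` for `u : X ⟶ G ∈ 𝒢`.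
Hence the end is carved out of `L = ∏_{G ∈ 𝒢} [F G, G]`: for each `X`, the elements of `L` whose
restrictions along all `u : X ⟶ G` come from a single element of `[F X, X]` form a subobject of
`L`, the pullback of the mono `[F X, X] ⟶ ∏_{u : X ⟶ G} [F X, G]`. The category is large, but
well-poweredness makes the intersection of these subobjects a small one, and it is the end.
-/

open CategoryTheory CategoryTheory.Limits CategoryTheory.MonoidalCategory
  CategoryTheory.MonoidalClosed Opposite

universe v u u'

namespace CategoryTheory

variable {C : Type u} [Category.{v} C]

-- `Subobject.sInf` is used with its universe fixed: the lattice instance leaves it undetermined.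
theorem Subobject.sInf_factors [WellPowered.{v} C] [HasWidePullbacks.{v} C] {A B : C}
    {s : Set (Subobject B)} (f : A ⟶ B) (h : ∀ P ∈ s, P.Factors f) :
    (Subobject.sInf.{v} s).Factors f := by
  have mem (j : equivShrink.{v} (Subobject B) '' s) : (equivShrink _).symm j.1 ∈ s := by
    obtain ⟨_, ⟨P, hP, rfl⟩⟩ := j
    simpa using hP
  exact ⟨WidePullback.lift f (fun j => factorThru _ f (h _ (mem j)))
    (fun j => factorThru_arrow _ _ _), WidePullback.lift_base _ _ _ _⟩

variable {J : Type u'} [Category.{v} J]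

def ObjectProperty.IsCoseparatingAlong (P : ObjectProperty J) (K : J ⥤ C) : Prop :=
  ∀ ⦃W : C⦄ ⦃Y : J⦄ (f g : W ⟶ K.obj Y),
    (∀ (G : J) (_ : P G) (h : Y ⟶ G), f ≫ K.map h = g ≫ K.map h) → f = g

theorem ObjectProperty.IsCoseparating.isCoseparatingAlong {P : ObjectProperty J}
    (hP : P.IsCoseparating) (K : J ⥤ C) [K.IsRightAdjoint] : P.IsCoseparatingAlong K := by
  intro W Y f g hfg
  let adj := Adjunction.ofIsRightAdjoint K
  apply (adj.homEquiv W Y).symm.injective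
  refine hP _ _ fun G hG h => ?_
  rw [← adj.homEquiv_naturality_right_symm, ← adj.homEquiv_naturality_right_symm, hfg G hG h]

noncomputable section

namespace Limits.EndOfCoseparating

variable [HasLimits C] (H : Jᵒᵖ ⥤ J ⥤ C) (𝒢 : Set J) [Small.{v} 𝒢]

instance : HasProductsOfShape 𝒢 C := hasProductsOfShape_of_small.{v} C 𝒢

instance (X : J) : HasProductsOfShape (Σ G : 𝒢, X ⟶ G) C := hasProductsOfShape_of_small.{v} C _

abbrev ambient : C := ∏ᶜ fun G : 𝒢 => (H.obj (op G.1)).obj G.1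

abbrev test (X : J) : C := ∏ᶜ fun i : Σ G : 𝒢, X ⟶ G => (H.obj (op X)).obj i.1.1

def diagToTest (X : J) : (H.obj (op X)).obj X ⟶ test H 𝒢 X :=
  Pi.lift fun i => (H.obj (op X)).map i.2

def ambientToTest (X : J) : ambient H 𝒢 ⟶ test H 𝒢 X :=
  Pi.lift fun i => Pi.π _ i.1 ≫ (H.map i.2.op).app i.1.1

variable {H 𝒢}

theorem mono_diagToTest (hH : ∀ X, ObjectProperty.IsCoseparatingAlong (· ∈ 𝒢) (H.obj X))
    (X : J) : Mono (diagToTest H 𝒢 X) :=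
  ⟨fun a b hab => hH _ a b fun G hG u => by simpa [diagToTest] using hab =≫ Pi.π _ ⟨⟨G, hG⟩, u⟩⟩

section Lift

variable {Z : C} (π : ∀ X : J, Z ⟶ (H.obj (op X)).obj X)

def ambientLift : Z ⟶ ambient H 𝒢 := Pi.lift fun G => π G

theorem ambientLift_ambientToTest
    (hπ : ∀ ⦃X Y : J⦄ (f : X ⟶ Y), π X ≫ (H.obj (op X)).map f = π Y ≫ (H.map f.op).app Y)
    (X : J) : ambientLift π ≫ ambientToTest H 𝒢 X = π X ≫ diagToTest H 𝒢 X := by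
  refine Pi.hom_ext _ _ fun ⟨G, u⟩ => ?_
  simpa [ambientLift, ambientToTest, diagToTest] using (hπ u).symm

end Lift

variable [WellPowered.{v} C] (hH : ∀ X, ObjectProperty.IsCoseparatingAlong (· ∈ 𝒢) (H.obj X))

def wedgeSubobject (X : J) : Subobject (ambient H 𝒢) :=
  haveI := mono_diagToTest hH X
  (Subobject.pullback (ambientToTest H 𝒢 X)).obj (Subobject.mk (diagToTest H 𝒢 X))

def endSubobject : Subobject (ambient H 𝒢) :=
  Subobject.sInf.{v} (Set.range (wedgeSubobject hH))

theorem endSubobject_le (X : J) : endSubobject hH ≤ wedgeSubobject hH X :=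
  Subobject.sInf_le.{v} _ _ ⟨X, rfl⟩

def endπ (X : J) : (endSubobject hH : C) ⟶ (H.obj (op X)).obj X :=
  haveI := mono_diagToTest hH X
  Subobject.factorThru _ _ ((pullback_factors_iff _ _ _).1 (Subobject.factors_of_le _
      (endSubobject_le hH X) (Subobject.factors_self _))) ≫
    (Subobject.underlyingIso (diagToTest H 𝒢 X)).hom

theorem endπ_diagToTest (X : J) :
    endπ hH X ≫ diagToTest H 𝒢 X = (endSubobject hH).arrow ≫ ambientToTest H 𝒢 X := by
  simp [endπ, Subobject.underlyingIso_hom_comp_eq_mk]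

theorem endπ_map (X : J) (G : 𝒢) (u : X ⟶ G) :
    endπ hH X ≫ (H.obj (op X)).map u =
      (endSubobject hH).arrow ≫ Pi.π _ G ≫ (H.map u.op).app G := by
  simpa [diagToTest, ambientToTest] using endπ_diagToTest hH X =≫ Pi.π _ ⟨G, u⟩

theorem endπ_of_mem (G : 𝒢) : endπ hH G = (endSubobject hH).arrow ≫ Pi.π _ G := by
  simpa using endπ_map hH G G (𝟙 _)

theorem endπ_wedge {X Y : J} (f : X ⟶ Y) :
    endπ hH X ≫ (H.obj (op X)).map f = endπ hH Y ≫ (H.map f.op).app Y := by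
  refine hH (op X) _ _ fun G hG u => ?_
  calc (endπ hH X ≫ (H.obj (op X)).map f) ≫ (H.obj (op X)).map u
      = (endSubobject hH).arrow ≫ Pi.π _ ⟨G, hG⟩ ≫ (H.map u.op).app G ≫ (H.map f.op).app G := by
        rw [Category.assoc, ← Functor.map_comp, endπ_map hH X ⟨G, hG⟩, op_comp, H.map_comp,
          NatTrans.comp_app]
    _ = (endπ hH Y ≫ (H.obj (op Y)).map u) ≫ (H.map f.op).app G := by
        rw [endπ_map hH Y ⟨G, hG⟩]
        simp only [Category.assoc]
    _ = (endπ hH Y ≫ (H.map f.op).app Y) ≫ (H.obj (op X)).map u := by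
        simp only [Category.assoc, NatTrans.naturality]

def wedge : Wedge H := Wedge.mk (endSubobject hH : C) (endπ hH) fun _ _ => endπ_wedge hH

theorem factors_endSubobject {Z : C} (π : ∀ X : J, Z ⟶ (H.obj (op X)).obj X)
    (hπ : ∀ ⦃X Y : J⦄ (f : X ⟶ Y), π X ≫ (H.obj (op X)).map f = π Y ≫ (H.map f.op).app Y) :
    (endSubobject hH).Factors (ambientLift π) := by
  refine Subobject.sInf_factors _ ?_
  rintro _ ⟨X, rfl⟩
  have := mono_diagToTest hH X
  exact (pullback_factors_iff _ _ _).2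
    ((Subobject.mk_factors_iff _ _).2 ⟨π X, (ambientLift_ambientToTest π hπ X).symm⟩)

theorem factorThru_endπ {Z : C} (π : ∀ X : J, Z ⟶ (H.obj (op X)).obj X)
    (hπ : ∀ ⦃X Y : J⦄ (f : X ⟶ Y), π X ≫ (H.obj (op X)).map f = π Y ≫ (H.map f.op).app Y)
    (X : J) :
    (endSubobject hH).factorThru _ (factors_endSubobject hH π hπ) ≫ endπ hH X = π X := by
  have := mono_diagToTest hH X
  rw [← cancel_mono (diagToTest H 𝒢 X), Category.assoc, endπ_diagToTest,
    Subobject.factorThru_arrow_assoc, ambientLift_ambientToTest π hπ]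

theorem hom_ext_endSubobject {Z : C} {a b : Z ⟶ endSubobject hH}
    (h : ∀ G : 𝒢, a ≫ endπ hH G = b ≫ endπ hH G) : a = b := by
  rw [← cancel_mono (endSubobject hH).arrow]
  refine Pi.hom_ext _ _ fun G => ?_
  simpa [endπ_of_mem] using h G

def isLimitWedge : IsLimit (wedge hH) :=
  Multifork.IsLimit.mk _
    (fun W => (endSubobject hH).factorThru _ (factors_endSubobject hH W.ι fun _ _ => Wedge.condition W))
    (fun W => factorThru_endπ hH W.ι fun _ _ => Wedge.condition W)
    fun W _ hm => hom_ext_endSubobject hH fun G =>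
      (hm G.1).trans (factorThru_endπ hH W.ι (fun _ _ => Wedge.condition W) G).symm

end Limits.EndOfCoseparating

theorem Limits.hasEnd_of_isCoseparatingAlong [HasLimits C] [WellPowered.{v} C]
    {H : Jᵒᵖ ⥤ J ⥤ C} {𝒢 : Set J} [Small.{v} 𝒢]
    (hH : ∀ X, ObjectProperty.IsCoseparatingAlong (· ∈ 𝒢) (H.obj X)) : HasEnd H :=
  HasLimit.mk ⟨_, EndOfCoseparating.isLimitWedge hH⟩

end

end CategoryTheory

theorem hasEnd_ihom_comp_general {C : Type u} [Category.{v} C] [MonoidalCategory C]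
    [MonoidalClosed C] [HasLimits C] [WellPowered.{v} C]
    (𝒢 : Set C) [Small.{v} 𝒢] (h𝒢 : ObjectProperty.IsCoseparating (fun X => X ∈ 𝒢)) (F : C ⥤ C) :
    HasEnd (F.op ⋙ MonoidalClosed.internalHom) :=
  hasEnd_of_isCoseparatingAlong fun X => h𝒢.isCoseparatingAlong (ihom (F.obj X.unop))

/-- If `C` is a symmetric monoidal closed, complete, well-powered category with a small
cogenerating family, then for any endofunctor `F : C ⥤ C` the end `∫_X X^{F(X)}` of the
bifunctor `(X, Y) ↦ Y^{F(X)}` exists. -/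
theorem hasEnd_ihom_comp {C : Type u} [Category.{v} C] [MonoidalCategory C]
    [SymmetricCategory C] [MonoidalClosed C] [HasLimits C] [WellPowered.{v} C]
    (𝒢 : Set C) [Small.{v} 𝒢] (h𝒢 : ObjectProperty.IsCoseparating (fun X => X ∈ 𝒢)) (F : C ⥤ C) :
    HasEnd (F.op ⋙ MonoidalClosed.internalHom) :=
  hasEnd_ihom_comp_general 𝒢 h𝒢 F
end

section
/- Let C be a symmetric monoidal closed complete well-powered category with a small cogenerating family whose product is P. For an object X, let M_X be the limit of the diagram consisting of P^{F(P)}, X^{F(X)}, and, for each arrow φ : X → P, a copy of P^{F(X)} with arrows P^{F(φ)} : P^{F(P)} → P^{F(X)} and φ^{F(X)} : X^{F(X)} → P^{F(X)}. Then the canonical projection m_X : M_X → P^{F(P)} is a monomorphism. -/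
open CategoryTheory CategoryTheory.Limits CategoryTheory.MonoidalCategory
  CategoryTheory.MonoidalClosed

universe v u

/-- Let `P` be a cogenerator of a symmetric monoidal closed complete category `C`, let
`F : C ⥤ C`, and let `M` (with projections `m : M ⟶ P^{F(P)}` and `n : M ⟶ X^{F(X)}`)
be the limit of the diagram consisting of `P^{F(P)}`, `X^{F(X)}` and, for each
`φ : X ⟶ P`, a copy of `P^{F(X)}` with the arrows `P^{F(φ)}` and `φ^{F(X)}`.
Then `m` is a monomorphism. -/
theorem mono_m {C : Type u} [Category.{v} C] [MonoidalCategory C] [SymmetricCategory C]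
    [MonoidalClosed C] [HasLimits C]
    (P : C) (hP : ∀ (Z X : C) (u v : Z ⟶ X), u ≠ v → ∃ φ : X ⟶ P, u ≫ φ ≠ v ≫ φ)
    (F : C ⥤ C) (X : C) (M : C)
    (m : M ⟶ (ihom (F.obj P)).obj P) (n : M ⟶ (ihom (F.obj X)).obj X)
    (hcomm : ∀ φ : X ⟶ P,
      m ≫ (MonoidalClosed.pre (F.map φ)).app P = n ≫ (ihom (F.obj X)).map φ)
    (hlim : ∀ (Z : C) (u : Z ⟶ (ihom (F.obj P)).obj P) (w : Z ⟶ (ihom (F.obj X)).obj X),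
      (∀ φ : X ⟶ P,
          u ≫ (MonoidalClosed.pre (F.map φ)).app P = w ≫ (ihom (F.obj X)).map φ) →
        ∃! l : Z ⟶ M, l ≫ m = u ∧ l ≫ n = w) :
    Mono m := by
  constructor
  intro Z u v huv
  have hn : u ≫ n = v ≫ n := by
    by_contra hne
    obtain ⟨φ, hφ⟩ := hP _ _ (MonoidalClosed.uncurry (u ≫ n)) (MonoidalClosed.uncurry (v ≫ n))
      (fun h => hne (by
        have := congrArg MonoidalClosed.curry h
        simpa [MonoidalClosed.curry_uncurry] using this))
    apply hφ
    rw [← MonoidalClosed.uncurry_natural_right, ← MonoidalClosed.uncurry_natural_right]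
    congr 1
    rw [Category.assoc, Category.assoc, ← hcomm φ, ← Category.assoc,
      ← Category.assoc, huv]
  obtain ⟨l, -, hu⟩ := hlim Z (u ≫ m) (u ≫ n) (fun φ => by
    rw [Category.assoc, Category.assoc, hcomm φ])
  rw [hu u ⟨rfl, rfl⟩, hu v ⟨huv.symm, hn.symm⟩]
end

section
/- Let C be a symmetric monoidal closed, small-complete, well-powered, locally small category with a small cogenerating family, and d : I → C a small diagram. Set Γ = ∫_X X^{Lim X^d} (which exists since X ↦ Lim X^d is an endofunctor of C). Then the arrows γ_i = ⟨(π_{i,X})‾⟩_X : d(i) → Γ form a cocone over d, and this cocone is weakly initial: for every cocone (δ_i : d(i) → D)_i there exists ψ : Γ → D with ψ ∘ γ_i = δ_i for all i. -/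
/-!
The family `X ↦ (π_{i,X})‾` is a wedge because the swap `f ↦ f̄` is natural in all three
variables, and `γ` is a cocone because the `π_{i,X}` form a cone. Given a cocone `δ`, the names
`𝟙 ⟶ D^{d(i)}` of the `δ_i` form a cone over `D^d`, i.e. an element `[δ]` of `Lim D^d`.
Evaluating a swapped arrow `f̄` at a global element `e` returns the arrow named by `e ≫ f`, so
`ψ ∘ γ_i = ev_{[δ]} ∘ (π_{i,D})‾` is the arrow named by `[δ] ≫ π_{i,D}`, which is `δ_i`.
-/

open CategoryTheory CategoryTheory.Limits CategoryTheory.MonoidalCategory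
  CategoryTheory.MonoidalClosed Opposite

universe v u

variable {C : Type u} [Category.{v} C] [MonoidalCategory C] [SymmetricCategory C]
  [MonoidalClosed C]

/-- The swap `f̄ : Y ⟶ Z^X` of an arrow `f : X ⟶ Z^Y`, defined as the transpose of
`ev ∘ (f ⊗ 1_Y) ∘ σ` (written here with the tensor-on-the-left convention). -/
noncomputable def swap {X Y Z : C} (f : X ⟶ (ihom Y).obj Z) : Y ⟶ (ihom X).obj Z :=
  MonoidalClosed.curry ((β_ X Y).hom ≫ Y ◁ f ≫ (ihom.ev Y).app Z)

section

variable {K : Type*} [Category K] [MonoidalCategory K] [MonoidalClosed K]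

lemma curry'_comp_pre_app {X Y Z : K} (f : Y ⟶ Z) (g : X ⟶ Y) :
    curry' f ≫ (pre g).app Z = curry' (g ≫ f) := by
  rw [curry', curry', curry_pre_app, rightUnitor_naturality_assoc]

lemma unitIsoSelf_hom_eq (X : K) :
    (unitIsoSelf X).hom = (λ_ _).inv ≫ (ihom.ev (𝟙_ K)).app X := by
  simp [unitIsoSelf, unitNatIso]

/-- Evaluation `ev_e = ι⁻¹ ∘ Z^e : Z^X ⟶ Z` at a global element `e` of `X`. -/
noncomputable def evalAt {X : K} (e : 𝟙_ K ⟶ X) (Z : K) : (ihom X).obj Z ⟶ Z :=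
  (pre e).app Z ≫ (unitIsoSelf Z).hom

end

lemma swap_comp_ihom_map {X Y Z Z' : C} (f : X ⟶ (ihom Y).obj Z) (g : Z ⟶ Z') :
    swap f ≫ (ihom X).map g = swap (f ≫ (ihom Y).map g) := by
  simp only [swap, ← curry_natural_right, MonoidalCategory.whiskerLeft_comp, Category.assoc,
    ihom.ev_naturality]

lemma swap_precomp {W X Y Z : C} (h : W ⟶ X) (f : X ⟶ (ihom Y).obj Z) :
    swap (h ≫ f) = swap f ≫ (pre h).app Z := by
  simp only [swap, curry_pre_app, MonoidalCategory.whiskerLeft_comp, Category.assoc,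
    BraidedCategory.braiding_naturality_left_assoc]

lemma comp_swap {X Y Y' Z : C} (g : Y' ⟶ Y) (f : X ⟶ (ihom Y).obj Z) :
    g ≫ swap f = swap (f ≫ (pre g).app Z) := by
  simp only [swap, ← curry_natural_left, MonoidalCategory.whiskerLeft_comp, Category.assoc,
    id_tensor_pre_app_comp_ev, whisker_exchange_assoc,
    BraidedCategory.braiding_naturality_right_assoc]

lemma swap_comp_evalAt {X Y Z : C} (f : X ⟶ (ihom Y).obj Z) (e : 𝟙_ C ⟶ X) :
    swap f ≫ evalAt e Z = uncurry' (e ≫ f) := by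
  rw [evalAt, ← Category.assoc, ← swap_precomp, unitIsoSelf_hom_eq, swap,
    leftUnitor_inv_naturality_assoc, ← uncurry_eq, uncurry_curry, uncurry', uncurry_eq,
    leftUnitor_inv_braiding_assoc]

variable [HasLimits C] {J : Type v} [Category.{v} J]

/-- The diagram `i ↦ X^{d(i)} : Jᵒᵖ ⥤ C`. -/
noncomputable def expDiagram (d : J ⥤ C) (X : C) : Jᵒᵖ ⥤ C :=
  d.op ⋙ MonoidalClosed.internalHom.flip.obj X

/-- The endofunctor `X ↦ Lim X^d` of `C`. -/
noncomputable def limExp (d : J ⥤ C) : C ⥤ C :=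
  MonoidalClosed.internalHom.flip ⋙ (Functor.whiskeringLeft Jᵒᵖ Cᵒᵖ C).obj d.op ⋙ lim

/-- The bifunctor `(X, Y) ↦ Y^{Lim X^d} : Cᵒᵖ ⥤ C ⥤ C`. -/
noncomputable def limExpBifunctor (d : J ⥤ C) : Cᵒᵖ ⥤ C ⥤ C :=
  (limExp d).op ⋙ MonoidalClosed.internalHom

lemma swap_limit_π_isWedge (d : J ⥤ C) (i : J) ⦃X Y : C⦄ (g : X ⟶ Y) :
    swap (limit.π (expDiagram d X) (op i)) ≫ ((limExpBifunctor d).obj (op X)).map g =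
      swap (limit.π (expDiagram d Y) (op i)) ≫ ((limExpBifunctor d).map g.op).app Y := by
  have hπ : (limExp d).map g ≫ limit.π (expDiagram d Y) (op i) =
      limit.π (expDiagram d X) (op i) ≫ (ihom (d.obj i)).map g := limMap_π _ _
  -- `rw` fails on such goals: `limit.π (expDiagram d X) (op i)` has the type `swap` expects
  -- only after unfolding `expDiagram` and `limExp`, so the equalities are chained by hand.
  exact ((swap_comp_ihom_map _ g).trans (congrArg swap hπ.symm)).trans (swap_precomp _ _)

noncomputable def coconeToEnd (d : J ⥤ C) [HasEnd (limExpBifunctor d)] (i : J) :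
    d.obj i ⟶ end_ (limExpBifunctor d) :=
  end_.lift (fun X => swap (limit.π (expDiagram d X) (op i))) (swap_limit_π_isWedge d i)

lemma coconeToEnd_π (d : J ⥤ C) [HasEnd (limExpBifunctor d)] (i : J) (X : C) :
    coconeToEnd d i ≫ end_.π (limExpBifunctor d) X = swap (limit.π (expDiagram d X) (op i)) :=
  end_.lift_π _ _ _

lemma map_comp_coconeToEnd (d : J ⥤ C) [HasEnd (limExpBifunctor d)] {i j : J} (θ : i ⟶ j) :
    d.map θ ≫ coconeToEnd d j = coconeToEnd d i :=
  end_.hom_ext fun X => by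
    rw [Category.assoc, coconeToEnd_π, coconeToEnd_π]
    exact (comp_swap _ _).trans (congrArg swap (limit.w (expDiagram d X) θ.op))

/-- The element `[δ] : 𝟙 ⟶ Lim D^d` of a cocone `δ` with vertex `D`. -/
noncomputable def coconeName {d : J ⥤ C} (D : Cocone d) : 𝟙_ C ⟶ limit (expDiagram d D.pt) :=
  limit.lift (expDiagram d D.pt)
    { pt := 𝟙_ C
      π.app i := curry' (D.ι.app i.unop)
      π.naturality i j θ := by
        change 𝟙 _ ≫ _ = _ ≫ (pre (d.map θ.unop)).app D.pt
        rw [Category.id_comp, curry'_comp_pre_app, D.w] }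

noncomputable def endWeakDesc {d : J ⥤ C} [HasEnd (limExpBifunctor d)] (D : Cocone d) :
    end_ (limExpBifunctor d) ⟶ D.pt :=
  end_.π (limExpBifunctor d) D.pt ≫ evalAt (coconeName D) D.pt

lemma coconeToEnd_comp_endWeakDesc {d : J ⥤ C} [HasEnd (limExpBifunctor d)] (D : Cocone d)
    (i : J) : coconeToEnd d i ≫ endWeakDesc D = D.ι.app i := by
  have hname : coconeName D ≫ limit.π (expDiagram d D.pt) (op i) = curry' (D.ι.app i) :=
    limit.lift_π _ _
  exact ((reassoc_of% coconeToEnd_π d i D.pt) _).trans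
    (((swap_comp_evalAt _ _).trans (congrArg uncurry' hname)).trans (uncurry'_curry' _))

theorem weakly_initial_cocone_of_end_general (d : J ⥤ C) [HasEnd (limExpBifunctor d)] :
    ∃ γ : ∀ i : J, d.obj i ⟶ end_ (limExpBifunctor d),
      (∀ (i : J) (X : C),
          γ i ≫ end_.π (limExpBifunctor d) X = swap (limit.π (expDiagram d X) (op i))) ∧
      (∀ (i j : J) (θ : i ⟶ j), d.map θ ≫ γ j = γ i) ∧
      (∀ D : Cocone d, ∃ ψ : end_ (limExpBifunctor d) ⟶ D.pt,
          ∀ i : J, γ i ≫ ψ = D.ι.app i) :=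
  ⟨coconeToEnd d, coconeToEnd_π d, fun _ _ => map_comp_coconeToEnd d,
    fun D => ⟨endWeakDesc D, coconeToEnd_comp_endWeakDesc D⟩⟩

/-- For `Γ = ∫_X X^{Lim X^d}` (which exists as `C` is moreover well-powered with a small
cogenerating family), the arrows `γ_i = ⟨(π_{i,X})‾⟩_X : d(i) ⟶ Γ` form a cocone over
`d`, and this cocone is weakly initial. -/
theorem weakly_initial_cocone_of_end [WellPowered.{v} C] (𝒢 : Set C) [Small.{v} 𝒢]
    (h𝒢 : ObjectProperty.IsCoseparating 𝒢) (d : J ⥤ C) [HasEnd (limExpBifunctor d)] :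
    ∃ γ : ∀ i : J, d.obj i ⟶ end_ (limExpBifunctor d),
      (∀ (i : J) (X : C),
          γ i ≫ end_.π (limExpBifunctor d) X = swap (limit.π (expDiagram d X) (op i))) ∧
      (∀ (i j : J) (θ : i ⟶ j), d.map θ ≫ γ j = γ i) ∧
      (∀ D : Cocone d, ∃ ψ : end_ (limExpBifunctor d) ⟶ D.pt,
          ∀ i : J, γ i ≫ ψ = D.ι.app i) :=
  weakly_initial_cocone_of_end_general d
end
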